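/- Every finite inverse semigroup all of whose subgroups are trivial (that is, every finite aperiodic inverse semigroup) is strongly Mal'cev nilpotent. (This is the containment A ∩ Inv ⊆ SMN, from which ⟨A ∩ Inv⟩ ⊆ A ∩ SMN follows.) -/
import Mathlib


namespace SMN

variable {S : Type*}

/-- Mal'cev sequences `(λ_n, ρ_n)`; `z k` plays the role of `z_{k+1}`. -/
def lr [Mul S] (x y : S) (z : ℕ → S) : ℕ → S × S
  | 0 => (x, y)
  | n + 1 =>
    let p := lr x y z n
    (p.1 * z n * p.2, p.2 * z n * p.1)

/-- Cyclic shift by `k` in `Fin t`. -/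
def cyc {t : ℕ} (i : Fin t) (k : ℕ) : Fin t :=
  ⟨(i.val + k) % t, Nat.mod_lt _ i.pos⟩

/-- Strong Mal'cev sequences `λ_{n,i}`; `z k` plays the role of `z_{k+1}`. -/
def slam [Mul S] {t : ℕ} (x : Fin t → S) (z : ℕ → S) : ℕ → Fin t → S
  | 0 => x
  | n + 1 =>
    let f := slam x z n
    fun i => (List.range (t - 1)).foldl (fun acc j => acc * z n * f (cyc i (j + 1))) (f i)

/-- A semigroup is Mal'cev nilpotent if for some `n ≥ 1`,
`λ_n = ρ_n` for all `x, y ∈ S` and `z₁, …, z_n ∈ S¹`. -/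
def MalcevNilpotent (S : Type*) [Semigroup S] : Prop :=
  ∃ n : ℕ, 1 ≤ n ∧ ∀ (x y : S) (z : ℕ → WithOne S),
    (lr (x : WithOne S) (y : WithOne S) z n).1 = (lr (x : WithOne S) (y : WithOne S) z n).2

/-- Strong Mal'cev nilpotency at level `n`. -/
def SMNAt (S : Type*) [Semigroup S] (n : ℕ) : Prop :=
  ∀ t : ℕ, 2 ≤ t → ∀ (x : Fin t → S) (z : ℕ → WithOne S) (i j : Fin t),
    slam (fun k => (x k : WithOne S)) z n i = slam (fun k => (x k : WithOne S)) z n j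

/-- A semigroup is strongly Mal'cev nilpotent if for some `n ≥ 1`, for every `t ≥ 2`,
`λ_{n,1} = ⋯ = λ_{n,t}` for all `x₁, …, x_t ∈ S` and `z₁, …, z_n ∈ S¹`. -/
def StronglyMalcevNilpotent (S : Type*) [Semigroup S] : Prop :=
  ∃ n : ℕ, 1 ≤ n ∧ SMNAt S n

/-- `y` is an inverse of `x`. -/
def IsInverseOf [Semigroup S] (y x : S) : Prop := x * y * x = x ∧ y * x * y = y

/-- A block group: every element has at most one inverse. -/
def BlockGroup (S : Type*) [Semigroup S] : Prop :=
  ∀ x y₁ y₂ : S, IsInverseOf y₁ x → IsInverseOf y₂ x → y₁ = y₂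

/-- All subgroups (subsemigroups which are groups) of `S` are nilpotent. -/
def AllSubgroupsNilpotent (S : Type*) [Semigroup S] : Prop :=
  ∀ (G : Type) [Group G], ∀ φ : G → S,
    (∀ a b : G, φ (a * b) = φ a * φ b) → Function.Injective φ → Group.IsNilpotent G

/-- All subgroups (subsemigroups which are groups) of `S` are trivial. -/
def AllSubgroupsTrivial (S : Type*) [Semigroup S] : Prop :=
  ∀ (G : Type) [Group G], ∀ φ : G → S,
    (∀ a b : G, φ (a * b) = φ a * φ b) → Function.Injective φ → ∀ g : G, g = 1

end SMN

namespace SMN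


/-- An element `x` has `y` as an inverse and this inverse is unique: `S` is an inverse
semigroup if every element has exactly one inverse. -/
def IsInverseSemigroup (S : Type*) [Semigroup S] : Prop :=
  ∀ x : S, ∃! y : S, IsInverseOf y x

section Abstract

variable {M : Type*} [Monoid M]

/-- J-order. -/
def JLe (a b : M) : Prop := ∃ u v : M, a = u * b * v

/-- J-equivalence. -/
def JEq (a b : M) : Prop := JLe a b ∧ JLe b a

theorem JLe.refl (a : M) : JLe a a := ⟨1, 1, by simp⟩

theorem JLe.trans {a b c : M} (h1 : JLe a b) (h2 : JLe b c) : JLe a c := by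
  obtain ⟨u, v, rfl⟩ := h1
  obtain ⟨u', v', rfl⟩ := h2
  exact ⟨u * u', v' * v, by simp [mul_assoc]⟩

theorem JEq.refl (a : M) : JEq a a := ⟨JLe.refl a, JLe.refl a⟩

theorem JEq.symm {a b : M} (h : JEq a b) : JEq b a := ⟨h.2, h.1⟩

theorem JEq.trans {a b c : M} (h1 : JEq a b) (h2 : JEq b c) : JEq a c :=
  ⟨h1.1.trans h2.1, h2.2.trans h1.2⟩

theorem JLe.mul_right {a b : M} (c : M) (h : JLe a b) : JLe (a * c) b := by
  obtain ⟨u, v, rfl⟩ := h; exact ⟨u, v * c, by simp [mul_assoc]⟩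

theorem JLe.mul_left {a b : M} (c : M) (h : JLe a b) : JLe (c * a) b := by
  obtain ⟨u, v, rfl⟩ := h; exact ⟨c * u, v, by simp [mul_assoc]⟩

/-- A bundle of data/hypotheses: an aperiodic inverse monoid. -/
structure Kit (M : Type*) [Monoid M] where
  i : M → M
  hi1 : ∀ x, x * i x * x = x
  hi2 : ∀ x, i x * x * i x = i x
  huniq : ∀ x y, x * y * x = x → y * x * y = y → y = i x
  haper : ∀ w : M, ∃ m, 1 ≤ m ∧ w ^ m = w ^ (m + 1)

namespace Kit

variable {M : Type*} [Monoid M] (K : Kit M)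

theorem i_i (x : M) : K.i (K.i x) = x := (K.huniq (K.i x) x (K.hi2 x) (K.hi1 x)).symm

theorem idemRR (x : M) : (x * K.i x) * (x * K.i x) = x * K.i x := by
  rw [← mul_assoc, K.hi1]

theorem idemLL (x : M) : (K.i x * x) * (K.i x * x) = K.i x * x := by
  rw [← mul_assoc, K.hi2]

theorem i_idem {e : M} (he : e * e = e) : K.i e = e :=
  (K.huniq e e (by rw [he, he]) (by rw [he, he])).symm

/-- Product of idempotents is idempotent (in an inverse monoid). -/
theorem mul_idem_aux (K : Kit M) {e f : M} (he : e * e = e) (hf : f * f = f) :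
    (e * f) * (e * f) = e * f := by
  obtain ⟨y, hy⟩ : ∃ y, y = K.i (e * f) := ⟨_, rfl⟩
  have h1 : (e * f) * y * (e * f) = e * f := by rw [hy]; exact K.hi1 _
  have h2 : y * (e * f) * y = y := by rw [hy]; exact K.hi2 _
  have key1 : f * y * e = y := by
    have h6 : f * y * e = K.i (e * f) := by
      refine K.huniq (e * f) (f * y * e) ?_ ?_
      · calc (e * f) * (f * y * e) * (e * f)
            = e * ((f * f) * (y * ((e * e) * f))) := by simp only [mul_assoc]
          _ = e * (f * (y * (e * f))) := by rw [he, hf]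
          _ = (e * f) * y * (e * f) := by simp only [mul_assoc]
          _ = e * f := h1
      · calc (f * y * e) * (e * f) * (f * y * e)
            = f * ((y * ((e * e) * ((f * f) * y))) * e) := by simp only [mul_assoc]
          _ = f * ((y * (e * (f * y))) * e) := by rw [he, hf]
          _ = f * ((y * (e * f) * y) * e) := by simp only [mul_assoc]
          _ = f * (y * e) := by rw [h2]
          _ = f * y * e := (mul_assoc f y e).symm
    rw [← hy] at h6; exact h6
  have hyidem : y * y = y := by
    conv_lhs => rw [← key1]
    calc (f * y * e) * (f * y * e)
        = f * ((y * (e * f) * y) * e) := by simp only [mul_assoc]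
      _ = f * (y * e) := by rw [h2]
      _ = f * y * e := (mul_assoc f y e).symm
      _ = y := key1
  have hef : e * f = y := by
    have h5 := K.huniq y (e * f) h2 h1
    rw [h5, hy] at *
    exact (K.i_idem hyidem)
  rw [hef]; exact hyidem

/-- Idempotents commute. -/
theorem idem_comm (K : Kit M) {e f : M} (he : e * e = e) (hf : f * f = f) : e * f = f * e := by
  have hef : (e * f) * (e * f) = e * f := K.mul_idem_aux he hf
  have hfe : (f * e) * (f * e) = f * e := K.mul_idem_aux hf he
  have h : f * e = K.i (e * f) := by
    refine K.huniq (e * f) (f * e) ?_ ?_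
    · calc (e * f) * (f * e) * (e * f)
          = e * ((f * f) * ((e * e) * f)) := by simp only [mul_assoc]
        _ = e * (f * (e * f)) := by rw [he, hf]
        _ = (e * f) * (e * f) := by simp only [mul_assoc]
        _ = e * f := hef
    · calc (f * e) * (e * f) * (f * e)
          = f * ((e * e) * ((f * f) * e)) := by simp only [mul_assoc]
        _ = f * (e * (f * e)) := by rw [he, hf]
        _ = (f * e) * (f * e) := by simp only [mul_assoc]
        _ = f * e := hfe
  rw [h, K.i_idem hef]

/-- Anti-homomorphism property of the inversion. -/
theorem i_mul (x y : M) : K.i (x * y) = K.i y * K.i x := by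
  have hc : (y * K.i y) * (K.i x * x) = (K.i x * x) * (y * K.i y) :=
    K.idem_comm (K.idemRR y) (K.idemLL x)
  refine (K.huniq (x * y) (K.i y * K.i x) ?_ ?_).symm
  · calc (x * y) * (K.i y * K.i x) * (x * y)
        = x * ((y * K.i y) * (K.i x * x)) * y := by simp only [mul_assoc]
      _ = x * ((K.i x * x) * (y * K.i y)) * y := by rw [hc]
      _ = (x * K.i x * x) * (y * K.i y * y) := by simp only [mul_assoc]
      _ = x * y := by rw [K.hi1, K.hi1]
  · calc (K.i y * K.i x) * (x * y) * (K.i y * K.i x)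
        = K.i y * ((K.i x * x) * (y * K.i y)) * K.i x := by simp only [mul_assoc]
      _ = K.i y * ((y * K.i y) * (K.i x * x)) * K.i x := by rw [hc]
      _ = (K.i y * y * K.i y) * (K.i x * x * K.i x) := by simp only [mul_assoc]
      _ = K.i y * K.i x := by rw [K.hi2, K.hi2]

theorem pow_stab {w : M} {m : ℕ} (h : w ^ m = w ^ (m + 1)) : ∀ k, w ^ (m + k) = w ^ m := by
  intro k
  induction k with
  | zero => rfl
  | succ k ih =>
    calc w ^ (m + (k + 1)) = w ^ (m + k) * w := pow_succ w (m + k)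
    _ = w ^ m * w := by rw [ih]
    _ = w ^ (m + 1) := (pow_succ w m).symm
    _ = w ^ m := h.symm

/-- Aperiodicity: an element whose left and right trace idempotents agree is idempotent. -/
theorem aper_fix {x : M} (h : x * K.i x = K.i x * x) : x = x * K.i x := by
  have hpow : ∀ m : ℕ, x ^ (m + 1) * (K.i x) ^ (m + 1) = x * K.i x := by
    intro m
    induction m with
    | zero => simp
    | succ m ih =>
      calc x ^ (m + 1 + 1) * (K.i x) ^ (m + 1 + 1)
          = (x * x ^ (m + 1)) * ((K.i x) ^ (m + 1) * K.i x) := by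
            rw [pow_succ (K.i x), pow_succ' x]
        _ = x * (x ^ (m + 1) * (K.i x) ^ (m + 1)) * K.i x := by simp only [mul_assoc]
        _ = x * (x * K.i x) * K.i x := by rw [ih]
        _ = x * (K.i x * x) * K.i x := by rw [h]
        _ = (x * K.i x) * (x * K.i x) := by simp only [mul_assoc]
        _ = x * K.i x := K.idemRR x
  obtain ⟨m, hm1, hm⟩ := K.haper x
  obtain ⟨m', rfl⟩ : ∃ m', m = m' + 1 := ⟨m - 1, by omega⟩
  have e1 : x * K.i x = x ^ (m' + 1) * (K.i x) ^ (m' + 1) := (hpow m').symm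
  have : x * K.i x = x * (x * K.i x) := by
    conv_lhs => rw [e1, hm, pow_succ' x, mul_assoc, hpow m']
  rw [this, h, ← mul_assoc, K.hi1]

theorem idem_pow (K : Kit M) (w : M) : ∃ m, 1 ≤ m ∧ w ^ m * w ^ m = w ^ m := by
  obtain ⟨m, hm1, hm⟩ := K.haper w
  exact ⟨m, hm1, by rw [← pow_add, pow_stab hm m]⟩

theorem B1 (K : Kit M) {a b c : M} (h : a * b * c = a) :
    (K.i a * a) * (b * K.i b) = K.i a * a := by
  have hee : (K.i a * a) * (K.i a * a) = K.i a * a := K.idemLL a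
  have hff : (b * K.i b) * (b * K.i b) = b * K.i b := K.idemRR b
  have hcomm : (K.i a * a) * (b * K.i b) = (b * K.i b) * (K.i a * a) := K.idem_comm hee hff
  have he : (K.i a * a) * (b * c) = K.i a * a := by
    calc (K.i a * a) * (b * c) = K.i a * (a * b * c) := by simp only [mul_assoc]
      _ = K.i a * a := by rw [h]
  have hk : ((K.i a * a) * (b * K.i b)) * (b * c) = K.i a * a := by
    calc ((K.i a * a) * (b * K.i b)) * (b * c)
        = (K.i a * a) * ((b * K.i b * b) * c) := by simp only [mul_assoc]
      _ = (K.i a * a) * (b * c) := by rw [K.hi1]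
      _ = K.i a * a := he
  have hkidem := K.mul_idem_aux hee hff
  have k2 : ((K.i a * a) * (b * K.i b)) * (K.i a * a) = K.i a * a := by
    calc ((K.i a * a) * (b * K.i b)) * (K.i a * a)
        = ((K.i a * a) * (b * K.i b)) * (((K.i a * a) * (b * K.i b)) * (b * c)) := by rw [hk]
      _ = (((K.i a * a) * (b * K.i b)) * ((K.i a * a) * (b * K.i b))) * (b * c) := by
          simp only [mul_assoc]
      _ = ((K.i a * a) * (b * K.i b)) * (b * c) := by rw [hkidem]
      _ = K.i a * a := hk
  have k1 : ((K.i a * a) * (b * K.i b)) * (K.i a * a) = (K.i a * a) * (b * K.i b) := by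
    calc ((K.i a * a) * (b * K.i b)) * (K.i a * a)
        = (K.i a * a) * ((b * K.i b) * (K.i a * a)) := by simp only [mul_assoc]
      _ = (K.i a * a) * ((K.i a * a) * (b * K.i b)) := by rw [← hcomm]
      _ = ((K.i a * a) * (K.i a * a)) * (b * K.i b) := by simp only [mul_assoc]
      _ = (K.i a * a) * (b * K.i b) := by rw [hee]
  exact k1.symm.trans k2

theorem B1' (K : Kit M) {a b c : M} (h : c * a * b = b) :
    (b * K.i b) * (K.i a * a) = b * K.i b := by
  have hee : (K.i a * a) * (K.i a * a) = K.i a * a := K.idemLL a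
  have hff : (b * K.i b) * (b * K.i b) = b * K.i b := K.idemRR b
  have hcomm : (K.i a * a) * (b * K.i b) = (b * K.i b) * (K.i a * a) := K.idem_comm hee hff
  have hf0 : (c * a) * (b * K.i b) = b * K.i b := by
    calc (c * a) * (b * K.i b) = (c * a * b) * K.i b := by simp only [mul_assoc]
      _ = b * K.i b := by rw [h]
  have hk : (c * a) * ((K.i a * a) * (b * K.i b)) = b * K.i b := by
    calc (c * a) * ((K.i a * a) * (b * K.i b))
        = (c * (a * K.i a * a)) * (b * K.i b) := by simp only [mul_assoc]
      _ = (c * a) * (b * K.i b) := by rw [K.hi1]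
      _ = b * K.i b := hf0
  have hkidem := K.mul_idem_aux hee hff
  have k1 : (b * K.i b) * ((K.i a * a) * (b * K.i b)) = b * K.i b := by
    calc (b * K.i b) * ((K.i a * a) * (b * K.i b))
        = ((c * a) * ((K.i a * a) * (b * K.i b))) * ((K.i a * a) * (b * K.i b)) := by rw [hk]
      _ = (c * a) * (((K.i a * a) * (b * K.i b)) * ((K.i a * a) * (b * K.i b))) := by
          simp only [mul_assoc]
      _ = (c * a) * ((K.i a * a) * (b * K.i b)) := by rw [hkidem]
      _ = b * K.i b := hk
  have k2 : (b * K.i b) * ((K.i a * a) * (b * K.i b)) = (K.i a * a) * (b * K.i b) := by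
    calc (b * K.i b) * ((K.i a * a) * (b * K.i b))
        = ((b * K.i b) * (K.i a * a)) * (b * K.i b) := by simp only [mul_assoc]
      _ = ((K.i a * a) * (b * K.i b)) * (b * K.i b) := by rw [← hcomm]
      _ = (K.i a * a) * ((b * K.i b) * (b * K.i b)) := by simp only [mul_assoc]
      _ = (K.i a * a) * (b * K.i b) := by rw [hff]
  calc (b * K.i b) * (K.i a * a) = (K.i a * a) * (b * K.i b) := hcomm.symm
    _ = (b * K.i b) * ((K.i a * a) * (b * K.i b)) := k2.symm
    _ = b * K.i b := k1

theorem stabR (K : Kit M) {a b : M} (h : ∃ u v, a = u * (a * b) * v) :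
    ∃ c, (a * b) * c = a := by
  obtain ⟨u, v, huv0⟩ := h
  have huv : a = u * a * (b * v) := by
    conv_lhs => rw [huv0]
    simp only [mul_assoc]
  have hiter : ∀ n, a = u ^ n * a * (b * v) ^ n := by
    intro n; induction n with
    | zero => simp
    | succ n ih =>
      calc a = u * a * (b * v) := huv
        _ = u * (u ^ n * a * (b * v) ^ n) * (b * v) := by conv_lhs => rw [ih]
        _ = (u * u ^ n) * a * ((b * v) ^ n * (b * v)) := by simp only [mul_assoc]
        _ = u ^ (n + 1) * a * (b * v) ^ (n + 1) := by rw [← pow_succ', ← pow_succ]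
  obtain ⟨m, hm1, hmid⟩ := K.idem_pow (b * v)
  have ha : a * (b * v) ^ m = a := by
    calc a * (b * v) ^ m
        = (u ^ m * a * (b * v) ^ m) * (b * v) ^ m := by conv_lhs => rw [hiter m]
      _ = u ^ m * a * ((b * v) ^ m * (b * v) ^ m) := by simp only [mul_assoc]
      _ = u ^ m * a * (b * v) ^ m := by rw [hmid]
      _ = a := (hiter m).symm
  obtain ⟨m', rfl⟩ : ∃ m', m = m' + 1 := ⟨m - 1, by omega⟩
  refine ⟨v * (b * v) ^ m', ?_⟩
  calc (a * b) * (v * (b * v) ^ m') = a * ((b * v) * (b * v) ^ m') := by simp only [mul_assoc]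
    _ = a * (b * v) ^ (m' + 1) := by rw [← pow_succ']
    _ = a := ha

theorem stabL (K : Kit M) {a b : M} (h : ∃ u v, b = u * (a * b) * v) :
    ∃ c, c * (a * b) = b := by
  obtain ⟨u, v, huv0⟩ := h
  have huv : b = (u * a) * b * v := by
    conv_lhs => rw [huv0]
    simp only [mul_assoc]
  have hiter : ∀ n, b = (u * a) ^ n * b * v ^ n := by
    intro n; induction n with
    | zero => simp
    | succ n ih =>
      calc b = (u * a) * b * v := huv
        _ = (u * a) * ((u * a) ^ n * b * v ^ n) * v := by conv_lhs => rw [ih]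
        _ = ((u * a) * (u * a) ^ n) * b * (v ^ n * v) := by simp only [mul_assoc]
        _ = (u * a) ^ (n + 1) * b * v ^ (n + 1) := by rw [← pow_succ', ← pow_succ]
  obtain ⟨m, hm1, hmid⟩ := K.idem_pow (u * a)
  have hb : (u * a) ^ m * b = b := by
    calc (u * a) ^ m * b
        = (u * a) ^ m * ((u * a) ^ m * b * v ^ m) := by conv_lhs => rw [hiter m]
      _ = ((u * a) ^ m * (u * a) ^ m) * b * v ^ m := by simp only [mul_assoc]
      _ = (u * a) ^ m * b * v ^ m := by rw [hmid]
      _ = b := (hiter m).symm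
  obtain ⟨m', rfl⟩ : ∃ m', m = m' + 1 := ⟨m - 1, by omega⟩
  refine ⟨(u * a) ^ m' * u, ?_⟩
  calc ((u * a) ^ m' * u) * (a * b) = ((u * a) ^ m' * (u * a)) * b := by simp only [mul_assoc]
    _ = (u * a) ^ (m' + 1) * b := by rw [← pow_succ]
    _ = b := hb

/-- The key local analysis: if `a`, `b`, and `a*z*b` are all J-equivalent, then
the various trace idempotents are related. -/
theorem chain (K : Kit M) {a b z : M} (ha : JEq a (a * z * b)) (hb : JEq b (a * z * b)) :
    (K.i a * a) * (z * K.i z) = K.i a * a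
    ∧ K.i z * (K.i a * a) * z = b * K.i b
    ∧ (a * z * b) * K.i (a * z * b) = a * K.i a
    ∧ K.i (a * z * b) * (a * z * b) = K.i b * b := by
  obtain ⟨c, hc⟩ : ∃ c, (a * (z * b)) * c = a := by
    apply K.stabR
    obtain ⟨u, v, huv⟩ := ha.1
    refine ⟨u, v, ?_⟩
    conv_lhs => rw [huv]
    simp only [mul_assoc]
  have hc' : a * z * (b * c) = a := by
    calc a * z * (b * c) = (a * (z * b)) * c := by simp only [mul_assoc]
      _ = a := hc
  have h_i : (K.i a * a) * (z * K.i z) = K.i a * a := K.B1 hc'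
  have hee : (K.i a * a) * (K.i a * a) = K.i a * a := K.idemLL a
  have hzz : (z * K.i z) * (z * K.i z) = z * K.i z := K.idemRR z
  have hff : (b * K.i b) * (b * K.i b) = b * K.i b := K.idemRR b
  have he2 : (K.i a * a) * (z * (b * c)) = K.i a * a := by
    calc (K.i a * a) * (z * (b * c)) = K.i a * (a * z * (b * c)) := by simp only [mul_assoc]
      _ = K.i a * a := by rw [hc']
  have hu_idem : (K.i z * (K.i a * a) * z) * (K.i z * (K.i a * a) * z)
      = K.i z * (K.i a * a) * z := by
    calc (K.i z * (K.i a * a) * z) * (K.i z * (K.i a * a) * z)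
        = K.i z * (((K.i a * a) * (z * K.i z)) * ((K.i a * a) * z)) := by simp only [mul_assoc]
      _ = K.i z * ((K.i a * a) * ((K.i a * a) * z)) := by rw [h_i]
      _ = K.i z * (((K.i a * a) * (K.i a * a)) * z) := by simp only [mul_assoc]
      _ = K.i z * ((K.i a * a) * z) := by rw [hee]
      _ = K.i z * (K.i a * a) * z := (mul_assoc _ _ _).symm
  obtain ⟨d, hd⟩ : ∃ d, d * ((a * z) * b) = b := by
    apply K.stabL
    obtain ⟨u, v, huv⟩ := hb.1
    refine ⟨u, v, ?_⟩
    conv_lhs => rw [huv]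
  have hd' : d * (a * z) * b = b := by
    calc d * (a * z) * b = d * ((a * z) * b) := by simp only [mul_assoc]
      _ = b := hd
  have hfu0 : (b * K.i b) * (K.i (a * z) * (a * z)) = b * K.i b := K.B1' hd'
  have hiaz : K.i (a * z) * (a * z) = K.i z * (K.i a * a) * z := by
    rw [K.i_mul]
    simp only [mul_assoc]
  have hfu : (b * K.i b) * (K.i z * (K.i a * a) * z) = b * K.i b := by
    rw [← hiaz]; exact hfu0
  have hcommuf : (K.i z * (K.i a * a) * z) * (b * K.i b)
      = (b * K.i b) * (K.i z * (K.i a * a) * z) := K.idem_comm hu_idem hff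
  have hk : ((K.i z * (K.i a * a) * z) * (b * K.i b)) * (b * (c * z))
      = K.i z * (K.i a * a) * z := by
    calc ((K.i z * (K.i a * a) * z) * (b * K.i b)) * (b * (c * z))
        = (K.i z * (K.i a * a) * z) * ((b * K.i b * b) * (c * z)) := by simp only [mul_assoc]
      _ = (K.i z * (K.i a * a) * z) * (b * (c * z)) := by rw [K.hi1]
      _ = K.i z * (((K.i a * a) * (z * (b * c))) * z) := by simp only [mul_assoc]
      _ = K.i z * ((K.i a * a) * z) := by rw [he2]
      _ = K.i z * (K.i a * a) * z := (mul_assoc _ _ _).symm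
  have hkidem := K.mul_idem_aux hu_idem hff
  have k2 : ((K.i z * (K.i a * a) * z) * (b * K.i b)) * (K.i z * (K.i a * a) * z)
      = K.i z * (K.i a * a) * z := by
    calc ((K.i z * (K.i a * a) * z) * (b * K.i b)) * (K.i z * (K.i a * a) * z)
        = ((K.i z * (K.i a * a) * z) * (b * K.i b))
            * (((K.i z * (K.i a * a) * z) * (b * K.i b)) * (b * (c * z))) := by rw [hk]
      _ = (((K.i z * (K.i a * a) * z) * (b * K.i b))
            * ((K.i z * (K.i a * a) * z) * (b * K.i b))) * (b * (c * z)) := by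
          simp only [mul_assoc]
      _ = ((K.i z * (K.i a * a) * z) * (b * K.i b)) * (b * (c * z)) := by rw [hkidem]
      _ = K.i z * (K.i a * a) * z := hk
  have k1 : ((K.i z * (K.i a * a) * z) * (b * K.i b)) * (K.i z * (K.i a * a) * z)
      = (K.i z * (K.i a * a) * z) * (b * K.i b) := by
    calc ((K.i z * (K.i a * a) * z) * (b * K.i b)) * (K.i z * (K.i a * a) * z)
        = (K.i z * (K.i a * a) * z) * ((b * K.i b) * (K.i z * (K.i a * a) * z)) := by
          simp only [mul_assoc]
      _ = (K.i z * (K.i a * a) * z) * ((K.i z * (K.i a * a) * z) * (b * K.i b)) := by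
          rw [← hcommuf]
      _ = ((K.i z * (K.i a * a) * z) * (K.i z * (K.i a * a) * z)) * (b * K.i b) := by
          simp only [mul_assoc]
      _ = (K.i z * (K.i a * a) * z) * (b * K.i b) := by rw [hu_idem]
  have huf : K.i z * (K.i a * a) * z = b * K.i b := by
    calc K.i z * (K.i a * a) * z
        = (K.i z * (K.i a * a) * z) * (b * K.i b) := k2.symm.trans k1
      _ = (b * K.i b) * (K.i z * (K.i a * a) * z) := hcommuf
      _ = b * K.i b := hfu
  have hcz : (K.i a * a) * (z * K.i z) = (z * K.i z) * (K.i a * a) := K.idem_comm hee hzz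
  have hiii : (a * z * b) * K.i (a * z * b) = a * K.i a := by
    calc (a * z * b) * K.i (a * z * b)
        = (a * z * b) * (K.i b * (K.i z * K.i a)) := by rw [K.i_mul (a * z) b, K.i_mul a z]
      _ = a * ((z * ((b * K.i b) * K.i z)) * K.i a) := by simp only [mul_assoc]
      _ = a * ((z * (((K.i z * (K.i a * a) * z)) * K.i z)) * K.i a) := by rw [← huf]
      _ = a * (((z * K.i z) * (K.i a * a)) * ((z * K.i z) * K.i a)) := by simp only [mul_assoc]
      _ = a * (((K.i a * a) * (z * K.i z)) * ((z * K.i z) * K.i a)) := by rw [← hcz]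
      _ = a * ((K.i a * a) * (((z * K.i z) * (z * K.i z)) * K.i a)) := by simp only [mul_assoc]
      _ = a * ((K.i a * a) * ((z * K.i z) * K.i a)) := by rw [hzz]
      _ = a * (((K.i a * a) * (z * K.i z)) * K.i a) := by simp only [mul_assoc]
      _ = a * ((K.i a * a) * K.i a) := by rw [h_i]
      _ = (a * K.i a) * (a * K.i a) := by simp only [mul_assoc]
      _ = a * K.i a := K.idemRR a
  have hiv : K.i (a * z * b) * (a * z * b) = K.i b * b := by
    calc K.i (a * z * b) * (a * z * b)
        = (K.i b * (K.i z * K.i a)) * (a * z * b) := by rw [K.i_mul (a * z) b, K.i_mul a z]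
      _ = K.i b * ((K.i z * (K.i a * a) * z) * b) := by simp only [mul_assoc]
      _ = K.i b * ((b * K.i b) * b) := by rw [huf]
      _ = K.i b * (b * K.i b * b) := rfl
      _ = K.i b * b := by rw [K.hi1]
  exact ⟨h_i, huf, hiii, hiv⟩

/-- If a single element conjugates a cyclic tuple of elements one step around,
then (in an aperiodic monoid) the tuple is constant. -/
theorem conj (K : Kit M) {t : ℕ} (ht : 1 ≤ t) (w : M) (e : ℕ → M)
    (hconj : ∀ j, K.i w * e j * w = e (j + 1))
    (hper : ∀ j, e (j + t) = e j) : ∀ j, e j = e 0 := by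
  have hiter : ∀ n j, e (j + n) = (K.i w) ^ n * e j * w ^ n := by
    intro n
    induction n with
    | zero => intro j; simp
    | succ n ih =>
      intro j
      calc e (j + (n + 1)) = K.i w * e (j + n) * w := (hconj (j + n)).symm
        _ = K.i w * ((K.i w) ^ n * e j * w ^ n) * w := by rw [ih j]
        _ = (K.i w * (K.i w) ^ n) * e j * (w ^ n * w) := by simp only [mul_assoc]
        _ = (K.i w) ^ (n + 1) * e j * w ^ (n + 1) := by rw [← pow_succ', ← pow_succ]
  obtain ⟨m1, hm11, hm1⟩ := K.haper w
  obtain ⟨m2, hm21, hm2⟩ := K.haper (K.i w)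
  have hN : m1 + m2 ≤ t * (m1 + m2) := Nat.le_mul_of_pos_left _ (by omega)
  have hwN : w ^ (t * (m1 + m2)) = w ^ (t * (m1 + m2) + 1) := by
    have h1 := pow_stab hm1 (t * (m1 + m2) - m1)
    have h2 := pow_stab hm1 (t * (m1 + m2) + 1 - m1)
    rw [show m1 + (t * (m1 + m2) - m1) = t * (m1 + m2) by omega] at h1
    rw [show m1 + (t * (m1 + m2) + 1 - m1) = t * (m1 + m2) + 1 by omega] at h2
    rw [h1, h2]
  have hiwN : (K.i w) ^ (t * (m1 + m2)) = (K.i w) ^ (t * (m1 + m2) + 1) := by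
    have h1 := pow_stab hm2 (t * (m1 + m2) - m2)
    have h2 := pow_stab hm2 (t * (m1 + m2) + 1 - m2)
    rw [show m2 + (t * (m1 + m2) - m2) = t * (m1 + m2) by omega] at h1
    rw [show m2 + (t * (m1 + m2) + 1 - m2) = t * (m1 + m2) + 1 by omega] at h2
    rw [h1, h2]
  have hperN : ∀ s j, e (j + t * s) = e j := by
    intro s
    induction s with
    | zero => intro j; simp
    | succ s ih =>
      intro j
      rw [show j + t * (s + 1) = (j + t * s) + t by ring, hper, ih]
  have hstep : ∀ j, e (j + 1) = e j := by
    intro j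
    have h0 : e j = (K.i w) ^ (t * (m1 + m2)) * e j * w ^ (t * (m1 + m2)) := by
      conv_lhs => rw [← hperN (m1 + m2) j, hiter (t * (m1 + m2)) j]
    calc e (j + 1) = K.i w * e j * w := (hconj j).symm
      _ = K.i w * ((K.i w) ^ (t * (m1 + m2)) * e j * w ^ (t * (m1 + m2))) * w := by
          conv_lhs => rw [h0]
      _ = (K.i w * (K.i w) ^ (t * (m1 + m2))) * e j * (w ^ (t * (m1 + m2)) * w) := by
          simp only [mul_assoc]
      _ = (K.i w) ^ (t * (m1 + m2) + 1) * e j * w ^ (t * (m1 + m2) + 1) := by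
          rw [← pow_succ', ← pow_succ]
      _ = (K.i w) ^ (t * (m1 + m2)) * e j * w ^ (t * (m1 + m2)) := by rw [← hwN, ← hiwN]
      _ = e j := h0.symm
  intro j
  induction j with
  | zero => rfl
  | succ j ih => rw [hstep j, ih]

end Kit


/-- Cyclic partial products: `prodC g z a k = g a * z * g (a+1) * z * ⋯ * z * g (a+k)`. -/
def prodC (g : ℕ → M) (z : M) (a : ℕ) : ℕ → M
  | 0 => g a
  | k + 1 => prodC g z a k * z * g (a + k + 1)

theorem prodC_zero (g : ℕ → M) (z : M) (a : ℕ) : prodC g z a 0 = g a := rfl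

theorem prodC_succ (g : ℕ → M) (z : M) (a k : ℕ) :
    prodC g z a (k + 1) = prodC g z a k * z * g (a + k + 1) := rfl

theorem prodC_congr {g g' : ℕ → M} {z : M} {a b : ℕ} (h : ∀ j, g (a + j) = g' (b + j)) :
    ∀ k, prodC g z a k = prodC g' z b k := by
  intro k
  induction k with
  | zero => exact h 0
  | succ k ih =>
    rw [prodC_succ, prodC_succ, ih, show g (a + k + 1) = g' (b + k + 1) from h (k + 1)]

theorem prodC_le (g : ℕ → M) (z : M) (a : ℕ) : ∀ k, JLe (prodC g z a k) (g a)
  | 0 => JLe.refl _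
  | k + 1 => by
    rw [prodC_succ]
    exact ((prodC_le g z a k).mul_right z).mul_right _

theorem prodC_suffix (g : ℕ → M) (z : M) (a k : ℕ) :
    ∀ l, ∃ w, prodC g z a (k + l) = prodC g z a k * w
  | 0 => ⟨1, (mul_one _).symm⟩
  | l + 1 => by
    obtain ⟨w, hw⟩ := prodC_suffix g z a k l
    refine ⟨w * z * g (a + (k + l) + 1), ?_⟩
    show prodC g z a ((k + l) + 1) = _
    rw [prodC_succ, hw]
    simp only [mul_assoc]

theorem prodC_le_factor (g : ℕ → M) (z : M) (a : ℕ) {k l : ℕ} (hl : l ≤ k) :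
    JLe (prodC g z a k) (g (a + l)) := by
  have h1 : JLe (prodC g z a l) (g (a + l)) := by
    cases l with
    | zero => exact JLe.refl _
    | succ l' =>
      rw [prodC_succ]
      exact (JLe.refl (g (a + l' + 1))).mul_left _
  obtain ⟨w, hw⟩ := prodC_suffix g z a l (k - l)
  rw [show l + (k - l) = k from by omega] at hw
  rw [hw]
  exact h1.mul_right w

/-- Analysis of one "good" level: if all values and all cyclic products are J-equivalent,
then each cyclic product equals its leading right-trace idempotent times `i z`. -/
theorem level (K : Kit M) {t : ℕ} (ht : 2 ≤ t) (g : ℕ → M) (z : M)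
    (hper : ∀ a, g (a + t) = g a)
    (hgood : ∀ a b, JEq (g a) (g b))
    (hgood2 : ∀ a b, JEq (prodC g z a (t - 1)) (g b)) :
    (∀ a, prodC g z a (t - 1) = (g a * K.i (g a)) * K.i z)
    ∧ (∀ a, K.i z * (K.i (g a) * g a) * z = g (a + 1) * K.i (g (a + 1)))
    ∧ (∀ a, (K.i (g a) * g a) * (z * K.i z) = K.i (g a) * g a) := by
  have hmid : ∀ a k, k ≤ t - 1 → JEq (prodC g z a k) (g a) := by
    intro a k hk
    constructor
    · exact prodC_le g z a k
    · obtain ⟨w, hw⟩ := prodC_suffix g z a k (t - 1 - k)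
      rw [show k + (t - 1 - k) = t - 1 from by omega] at hw
      have h1 : JLe (prodC g z a (t - 1)) (prodC g z a k) := by
        rw [hw]; exact (JLe.refl _).mul_right w
      exact ((hgood2 a a).2).trans h1
  have key12 : ∀ a, (K.i (g a) * g a) * (z * K.i z) = K.i (g a) * g a
      ∧ K.i z * (K.i (g a) * g a) * z = g (a + 1) * K.i (g (a + 1)) := by
    intro a
    have hJ1 : JEq (g a) (g a * z * g (a + 1)) := (hmid a 1 (by omega)).symm
    have hJ2 : JEq (g (a + 1)) (g a * z * g (a + 1)) :=
      (hgood (a + 1) a).trans (hmid a 1 (by omega)).symm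
    obtain ⟨c1, c2, _, _⟩ := K.chain hJ1 hJ2
    exact ⟨c1, c2⟩
  have key2 : ∀ a, (K.i (g a) * g a) * (z * K.i z) = K.i (g a) * g a := fun a => (key12 a).1
  have key1 : ∀ a, K.i z * (K.i (g a) * g a) * z = g (a + 1) * K.i (g (a + 1)) :=
    fun a => (key12 a).2
  have htrack : ∀ k, k ≤ t - 1 → ∀ a,
      prodC g z a k * K.i (prodC g z a k) = g a * K.i (g a)
      ∧ K.i (prodC g z a k) * prodC g z a k = K.i (g (a + k)) * g (a + k) := by
    intro k
    induction k with
    | zero => exact fun _ a => ⟨rfl, rfl⟩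
    | succ k ih =>
      intro hk a
      obtain ⟨ih1, ih2⟩ := ih (by omega) a
      have hJ1 : JEq (prodC g z a k) (prodC g z a k * z * g (a + k + 1)) :=
        (hmid a k (by omega)).trans (hmid a (k + 1) hk).symm
      have hJ2 : JEq (g (a + k + 1)) (prodC g z a k * z * g (a + k + 1)) :=
        (hgood (a + k + 1) a).trans (hmid a (k + 1) hk).symm
      obtain ⟨_, _, c3, c4⟩ := K.chain hJ1 hJ2
      exact ⟨c3.trans ih1, c4⟩
  have hfin : ∀ a, prodC g z a (t - 1) = (g a * K.i (g a)) * K.i z := by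
    intro a
    obtain ⟨hE, hF⟩ := htrack (t - 1) le_rfl a
    have hK1 : K.i z * (K.i (g (a + (t - 1))) * g (a + (t - 1))) * z = g a * K.i (g a) := by
      have h2 := key1 (a + (t - 1))
      rw [show a + (t - 1) + 1 = a + t from by omega, hper a] at h2
      exact h2
    have s0 : prodC g z a (t - 1) * (K.i (prodC g z a (t - 1)) * prodC g z a (t - 1))
        = prodC g z a (t - 1) := by
      rw [← mul_assoc]; exact K.hi1 _
    have s1 : prodC g z a (t - 1) * (z * K.i z) = prodC g z a (t - 1) := by
      conv_lhs => rw [← s0]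
      rw [hF, mul_assoc, key2, ← hF]
      exact s0
    have s2 : (prodC g z a (t - 1) * z) * K.i (prodC g z a (t - 1) * z)
        = g a * K.i (g a) := by
      rw [K.i_mul]
      calc (prodC g z a (t - 1) * z) * (K.i z * K.i (prodC g z a (t - 1)))
          = (prodC g z a (t - 1) * (z * K.i z)) * K.i (prodC g z a (t - 1)) := by
            simp only [mul_assoc]
        _ = prodC g z a (t - 1) * K.i (prodC g z a (t - 1)) := by rw [s1]
        _ = g a * K.i (g a) := hE
    have s3 : K.i (prodC g z a (t - 1) * z) * (prodC g z a (t - 1) * z)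
        = g a * K.i (g a) := by
      rw [K.i_mul]
      calc (K.i z * K.i (prodC g z a (t - 1))) * (prodC g z a (t - 1) * z)
          = K.i z * (K.i (prodC g z a (t - 1)) * prodC g z a (t - 1)) * z := by
            simp only [mul_assoc]
        _ = K.i z * (K.i (g (a + (t - 1))) * g (a + (t - 1))) * z := by rw [hF]
        _ = g a * K.i (g a) := hK1
    have s4 : prodC g z a (t - 1) * z = g a * K.i (g a) := by
      have hx := K.aper_fix (x := prodC g z a (t - 1) * z) (s2.trans s3.symm)
      rw [hx, s2]
    calc prodC g z a (t - 1) = prodC g z a (t - 1) * (z * K.i z) := s1.symm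
      _ = (prodC g z a (t - 1) * z) * K.i z := (mul_assoc _ _ _).symm
      _ = (g a * K.i (g a)) * K.i z := by rw [s4]
  exact ⟨hfin, key1, key2⟩


/-- Two consecutive good levels force the next level to be constant. -/
theorem twolevel (K : Kit M) {t : ℕ} (ht : 2 ≤ t) (g : ℕ → M) (z z' : M)
    (hper : ∀ a, g (a + t) = g a)
    (hgood : ∀ a b, JEq (g a) (g b))
    (hgood2 : ∀ a b, JEq (prodC g z a (t - 1)) (g b))
    (hgood3 : ∀ a b, JEq (prodC (fun c => prodC g z c (t - 1)) z' a (t - 1))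
        (prodC g z b (t - 1))) :
    ∀ a b, prodC (fun c => prodC g z c (t - 1)) z' a (t - 1)
         = prodC (fun c => prodC g z c (t - 1)) z' b (t - 1) := by
  obtain ⟨LV1, LV2, LV3⟩ := level K ht g z hper hgood hgood2
  have hEz : ∀ a, (g a * K.i (g a)) * (K.i z * z) = g a * K.i (g a) := by
    intro a
    have h1 : g (a + t) * K.i (g (a + t)) = g a * K.i (g a) := by rw [hper]
    have h2 := LV2 (a + t - 1)
    rw [show a + t - 1 + 1 = a + t from by omega] at h2
    calc (g a * K.i (g a)) * (K.i z * z)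
        = (g (a + t) * K.i (g (a + t))) * (K.i z * z) := by rw [h1]
      _ = (K.i z * (K.i (g (a + t - 1)) * g (a + t - 1)) * z) * (K.i z * z) := by rw [h2]
      _ = K.i z * (((K.i (g (a + t - 1)) * g (a + t - 1)) * (z * K.i z)) * z) := by
          simp only [mul_assoc]
      _ = K.i z * ((K.i (g (a + t - 1)) * g (a + t - 1)) * z) := by rw [LV3]
      _ = K.i z * (K.i (g (a + t - 1)) * g (a + t - 1)) * z := (mul_assoc _ _ _).symm
      _ = g (a + t) * K.i (g (a + t)) := h2
      _ = g a * K.i (g a) := h1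
  have hidem : ∀ a, (g a * K.i (g a)) * (g a * K.i (g a)) = g a * K.i (g a) :=
    fun a => K.idemRR (g a)
  have hih : ∀ a, K.i (prodC g z a (t - 1)) = z * (g a * K.i (g a)) := by
    intro a
    rw [LV1 a, K.i_mul, K.i_i, K.i_idem (hidem a)]
  have hE' : ∀ a, prodC g z a (t - 1) * K.i (prodC g z a (t - 1)) = g a * K.i (g a) := by
    intro a
    rw [hih a, LV1 a]
    calc ((g a * K.i (g a)) * K.i z) * (z * (g a * K.i (g a)))
        = ((g a * K.i (g a)) * (K.i z * z)) * (g a * K.i (g a)) := by simp only [mul_assoc]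
      _ = (g a * K.i (g a)) * (g a * K.i (g a)) := by rw [hEz a]
      _ = g a * K.i (g a) := hidem a
  have hF' : ∀ a, K.i (prodC g z a (t - 1)) * prodC g z a (t - 1)
      = z * (g a * K.i (g a)) * K.i z := by
    intro a
    rw [hih a, LV1 a]
    calc (z * (g a * K.i (g a))) * ((g a * K.i (g a)) * K.i z)
        = z * (((g a * K.i (g a)) * (g a * K.i (g a))) * K.i z) := by simp only [mul_assoc]
      _ = z * ((g a * K.i (g a)) * K.i z) := by rw [hidem a]
      _ = z * (g a * K.i (g a)) * K.i z := (mul_assoc _ _ _).symm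
  have hper' : ∀ a, prodC g z (a + t) (t - 1) = prodC g z a (t - 1) := by
    intro a
    exact prodC_congr (fun j => by rw [show a + t + j = (a + j) + t from by omega, hper]) (t - 1)
  have hgood' : ∀ a b, JEq (prodC g z a (t - 1)) (prodC g z b (t - 1)) :=
    fun a b => (hgood2 a 0).trans (hgood2 b 0).symm
  obtain ⟨LV1', LV2', _⟩ := level K ht (fun c => prodC g z c (t - 1)) z' hper' hgood' hgood3
  replace LV1' : ∀ a, prodC (fun c => prodC g z c (t - 1)) z' a (t - 1)
      = (prodC g z a (t - 1) * K.i (prodC g z a (t - 1))) * K.i z' := LV1'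
  replace LV2' : ∀ a, K.i z' * (K.i (prodC g z a (t - 1)) * prodC g z a (t - 1)) * z'
      = prodC g z (a + 1) (t - 1) * K.i (prodC g z (a + 1) (t - 1)) := LV2'
  have hconj : ∀ a, K.i (K.i z * z') * (g a * K.i (g a)) * (K.i z * z')
      = g (a + 1) * K.i (g (a + 1)) := by
    intro a
    have h3 := LV2' a
    rw [hF' a, hE' (a + 1)] at h3
    calc K.i (K.i z * z') * (g a * K.i (g a)) * (K.i z * z')
        = (K.i z' * K.i (K.i z)) * (g a * K.i (g a)) * (K.i z * z') := by rw [K.i_mul]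
      _ = (K.i z' * z) * (g a * K.i (g a)) * (K.i z * z') := by rw [K.i_i]
      _ = K.i z' * (z * (g a * K.i (g a)) * K.i z) * z' := by simp only [mul_assoc]
      _ = g (a + 1) * K.i (g (a + 1)) := h3
  have hcollapse : ∀ j, g j * K.i (g j) = g 0 * K.i (g 0) :=
    K.conj (t := t) (by omega) (K.i z * z') (fun a => g a * K.i (g a)) hconj
      (fun j => by show g (j + t) * K.i (g (j + t)) = g j * K.i (g j); rw [hper])
  intro a b
  rw [LV1' a, LV1' b, hE' a, hE' b, hcollapse a, hcollapse b]


end Abstract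

section Bridge

variable {M : Type*} [Monoid M]

theorem foldl_prodC {t : ℕ} (f : Fin t → M) (zz : M) (i : Fin t) (tpos : 0 < t) :
    ∀ k, (List.range k).foldl (fun acc j => acc * zz * f (cyc i (j + 1))) (f i)
      = prodC (fun a => f ⟨a % t, Nat.mod_lt a tpos⟩) zz i.val k := by
  intro k
  induction k with
  | zero =>
    have h : (⟨i.val % t, Nat.mod_lt i.val tpos⟩ : Fin t) = i :=
      Fin.ext (Nat.mod_eq_of_lt i.isLt)
    rw [List.range_zero, List.foldl_nil, prodC_zero, h]
  | succ k ih =>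
    rw [List.range_succ, List.foldl_append, List.foldl_cons, List.foldl_nil, ih, prodC_succ]
    congr 1

/-- The "good level" predicate. -/
def GoodAt {t : ℕ} (x : Fin t → M) (z : ℕ → M) (m : ℕ) : Prop :=
  ∀ i j : Fin t, JEq (slam x z m i) (slam x z m j) ∧ JEq (slam x z (m + 1) i) (slam x z m j)

/-- The set of common upper bounds of level `m` in the J-order. -/
def DSet {t : ℕ} (x : Fin t → M) (z : ℕ → M) (m : ℕ) : Set M :=
  {u | ∀ i : Fin t, JLe (slam x z m i) u}

theorem mainAbstract (K : Kit M) [Finite M] {t : ℕ} (ht : 2 ≤ t) (x : Fin t → M)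
    (z : ℕ → M) {n : ℕ} (hn : 4 * Nat.card M + 6 ≤ n) :
    ∀ i j : Fin t, slam x z n i = slam x z n j := by
  have tpos : 0 < t := by omega
  have hbridge : ∀ (m : ℕ) (i : Fin t), slam x z (m + 1) i
      = prodC (fun a => slam x z m ⟨a % t, Nat.mod_lt a tpos⟩) (z m) i.val (t - 1) := by
    intro m i
    show (List.range (t - 1)).foldl
        (fun acc j => acc * z m * slam x z m (cyc i (j + 1))) (slam x z m i) = _
    exact foldl_prodC _ _ _ tpos (t - 1)
  have hbridge2 : ∀ (m : ℕ) (a : ℕ), slam x z (m + 1) ⟨a % t, Nat.mod_lt a tpos⟩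
      = prodC (fun c => slam x z m ⟨c % t, Nat.mod_lt c tpos⟩) (z m) a (t - 1) := by
    intro m a
    rw [hbridge m ⟨a % t, Nat.mod_lt a tpos⟩]
    refine prodC_congr (fun j => ?_) (t - 1)
    congr 1
    exact Fin.ext (by simp [Nat.mod_add_mod])
  have hgper : ∀ (m : ℕ) (a : ℕ), slam x z m ⟨(a + t) % t, Nat.mod_lt (a + t) tpos⟩
      = slam x z m ⟨a % t, Nat.mod_lt a tpos⟩ := by
    intro m a; congr 1; exact Fin.ext (Nat.add_mod_right a t)
  have hdrop : ∀ (m : ℕ) (i j : Fin t), JLe (slam x z (m + 1) i) (slam x z m j) := by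
    intro m i j
    rw [hbridge m i]
    have hl : (j.val + t - i.val) % t ≤ t - 1 := by
      have := Nat.mod_lt (j.val + t - i.val) tpos; omega
    have h1 := prodC_le_factor (fun a => slam x z m ⟨a % t, Nat.mod_lt a tpos⟩)
      (z m) i.val hl
    have hidx : (⟨(i.val + (j.val + t - i.val) % t) % t,
        Nat.mod_lt _ tpos⟩ : Fin t) = j := by
      apply Fin.ext
      show (i.val + (j.val + t - i.val) % t) % t = j.val
      have e1 : (i.val + (j.val + t - i.val) % t) % t
          = (i.val + (j.val + t - i.val)) % t := Nat.add_mod_mod _ _ _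
      have e2 : i.val + (j.val + t - i.val) = j.val + t := by
        have := i.isLt; omega
      rw [e1, e2, Nat.add_mod_right, Nat.mod_eq_of_lt j.isLt]
    have h1' : JLe (prodC (fun a => slam x z m ⟨a % t, Nat.mod_lt a tpos⟩) (z m) i.val (t - 1))
        (slam x z m ⟨(i.val + (j.val + t - i.val) % t) % t, Nat.mod_lt _ tpos⟩) := h1
    rwa [hidx] at h1' 
  have hmono : ∀ m, DSet x z m ⊆ DSet x z (m + 1) := by
    intro m u hu i
    exact (hdrop m i ⟨0, tpos⟩).trans (hu ⟨0, tpos⟩)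
  have hmono' : ∀ m d, DSet x z m ⊆ DSet x z (m + d) := by
    intro m d
    induction d with
    | zero => exact subset_rfl
    | succ d ih => exact ih.trans (hmono (m + d))
  have hmono'' : ∀ m m', m ≤ m' → DSet x z m ⊆ DSet x z m' := by
    intro m m' h
    have := hmono' m (m' - m)
    rwa [show m + (m' - m) = m' from by omega] at this
  have hnotgood : ∀ m, ¬ GoodAt x z m → (DSet x z m).ncard < (DSet x z (m + 2)).ncard := by
    intro m hng
    have hv : ∃ v : M, (∀ i : Fin t, JLe (slam x z (m + 2) i) v)
        ∧ ∃ i, ¬ JLe (slam x z m i) v := by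
      rw [GoodAt, not_forall] at hng
      obtain ⟨i, hng⟩ := hng
      rw [not_forall] at hng
      obtain ⟨j, hng⟩ := hng
      rw [not_and_or] at hng
      rcases hng with h | h
      · rw [JEq, not_and_or] at h
        rcases h with h | h
        · exact ⟨slam x z m j,
            fun k => (hdrop (m + 1) k ⟨0, tpos⟩).trans (hdrop m ⟨0, tpos⟩ j), ⟨i, h⟩⟩
        · exact ⟨slam x z m i,
            fun k => (hdrop (m + 1) k ⟨0, tpos⟩).trans (hdrop m ⟨0, tpos⟩ i), ⟨j, h⟩⟩
      · rw [JEq, not_and_or] at h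
        rcases h with h | h
        · refine ⟨slam x z m j,
            fun k => (hdrop (m + 1) k ⟨0, tpos⟩).trans (hdrop m ⟨0, tpos⟩ j), ?_⟩
          by_contra hc
          push_neg at hc
          exact h ((hdrop m i ⟨0, tpos⟩).trans (hc ⟨0, tpos⟩))
        · refine ⟨slam x z (m + 1) i, fun k => hdrop (m + 1) k i, ?_⟩
          by_contra hc
          push_neg at hc
          exact h (hc j)
    obtain ⟨v, hv1, i0, hv2⟩ := hv
    have hssub : DSet x z m ⊂ DSet x z (m + 2) := by
      refine (Set.ssubset_iff_of_subset (hmono'' m (m + 2) (by omega))).mpr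
        ⟨v, hv1, fun hmem => hv2 (hmem i0)⟩
    exact Set.ncard_lt_ncard hssub (Set.toFinite _)
  have hkey : ∀ k, (∃ m, m + 2 ≤ 4 * k + 2 ∧ GoodAt x z m ∧ GoodAt x z (m + 1))
      ∨ k ≤ (DSet x z (4 * k)).ncard := by
    intro k
    induction k with
    | zero => right; exact Nat.zero_le _
    | succ k ih =>
      rcases ih with ⟨m, hm, hg⟩ | hcard
      · left; exact ⟨m, by omega, hg⟩
      · by_cases hgg : GoodAt x z (4 * k) ∧ GoodAt x z (4 * k + 1)
        · left; exact ⟨4 * k, by omega, hgg⟩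
        · rw [not_and_or] at hgg
          right
          rcases hgg with h | h
          · have h1 := hnotgood _ h
            have h2 := Set.ncard_le_ncard (hmono'' (4 * k + 2) (4 * (k + 1)) (by omega))
              (Set.toFinite _)
            omega
          · have h0 := Set.ncard_le_ncard (hmono'' (4 * k) (4 * k + 1) (by omega))
              (Set.toFinite _)
            have h1 := hnotgood _ h
            have h2 := Set.ncard_le_ncard (hmono'' (4 * k + 1 + 2) (4 * (k + 1)) (by omega))
              (Set.toFinite _)
            omega
  have hfind : ∃ m, m + 2 ≤ 4 * Nat.card M + 6 ∧ GoodAt x z m ∧ GoodAt x z (m + 1) := by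
    rcases hkey (Nat.card M + 1) with ⟨m, hm, hg⟩ | hcard
    · exact ⟨m, by omega, hg⟩
    · exfalso
      have hle : (DSet x z (4 * (Nat.card M + 1))).ncard ≤ Nat.card M := by
        have := Set.ncard_le_ncard (Set.subset_univ (DSet x z (4 * (Nat.card M + 1))))
          (Set.toFinite _)
        rwa [Set.ncard_univ] at this
      omega
  obtain ⟨m, hm2, hgm, hgm1⟩ := hfind
  have hconst : ∀ i j : Fin t, slam x z (m + 2) i = slam x z (m + 2) j := by
    have H := twolevel K ht (fun a => slam x z m ⟨a % t, Nat.mod_lt a tpos⟩)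
      (z m) (z (m + 1)) (hgper m)
      (fun a b => (hgm ⟨a % t, Nat.mod_lt a tpos⟩ ⟨b % t, Nat.mod_lt b tpos⟩).1)
      (fun a b => by
        rw [← hbridge2 m a]
        exact (hgm ⟨a % t, Nat.mod_lt a tpos⟩ ⟨b % t, Nat.mod_lt b tpos⟩).2)
      (fun a b => by
        have e1 : prodC (fun c => prodC (fun a => slam x z m ⟨a % t, Nat.mod_lt a tpos⟩)
              (z m) c (t - 1)) (z (m + 1)) a (t - 1)
            = prodC (fun c => slam x z (m + 1) ⟨c % t, Nat.mod_lt c tpos⟩)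
              (z (m + 1)) a (t - 1) :=
          prodC_congr (fun j => (hbridge2 m (a + j)).symm) (t - 1)
        rw [e1, ← hbridge2 (m + 1) a, ← hbridge2 m b]
        exact (hgm1 ⟨a % t, Nat.mod_lt a tpos⟩ ⟨b % t, Nat.mod_lt b tpos⟩).2)
    intro i j
    have hi : slam x z (m + 2) i = slam x z (m + 2) ⟨i.val % t, Nat.mod_lt i.val tpos⟩ := by
      congr 1
      exact (Fin.ext (Nat.mod_eq_of_lt i.isLt)).symm
    have hj : slam x z (m + 2) j = slam x z (m + 2) ⟨j.val % t, Nat.mod_lt j.val tpos⟩ := by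
      congr 1
      exact (Fin.ext (Nat.mod_eq_of_lt j.isLt)).symm
    have e2 : ∀ a : ℕ, slam x z (m + 2) ⟨a % t, Nat.mod_lt a tpos⟩
        = prodC (fun c => prodC (fun a => slam x z m ⟨a % t, Nat.mod_lt a tpos⟩)
            (z m) c (t - 1)) (z (m + 1)) a (t - 1) := by
      intro a
      rw [hbridge2 (m + 1) a]
      exact prodC_congr (fun j => hbridge2 m (a + j)) (t - 1)
    rw [hi, hj, e2, e2]
    exact H i.val j.val
  have hprop : ∀ d (i j : Fin t), slam x z (m + 2 + d) i = slam x z (m + 2 + d) j := by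
    intro d
    induction d with
    | zero => exact hconst
    | succ d ih =>
      intro i j
      show slam x z ((m + 2 + d) + 1) i = slam x z ((m + 2 + d) + 1) j
      rw [hbridge (m + 2 + d) i, hbridge (m + 2 + d) j]
      exact prodC_congr (fun l => ih _ _) (t - 1)
  intro i j
  have hh := hprop (n - (m + 2)) i j
  rwa [show m + 2 + (n - (m + 2)) = n from by omega] at hh

end Bridge



section WithOnePart

variable {S : Type*} [Semigroup S]

theorem coe_pow_exists (s : S) : ∀ k : ℕ, ∃ u : S, (u : WithOne S) = (s : WithOne S) ^ (k + 1)
  | 0 => ⟨s, by rw [pow_one]⟩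
  | k + 1 => by
    obtain ⟨u, hu⟩ := coe_pow_exists s k
    exact ⟨u * s, by rw [WithOne.coe_mul, hu, ← pow_succ]⟩

/-- Aperiodicity of `S¹` from triviality of all subgroups of `S`. -/
theorem haper_withOne [Finite S] (htriv : AllSubgroupsTrivial S) :
    ∀ w : WithOne S, ∃ m, 1 ≤ m ∧ w ^ m = w ^ (m + 1) := by
  haveI : Fintype S := Fintype.ofFinite S
  haveI : Finite (WithOne S) := inferInstanceAs (Finite (Option S))
  intro w
  by_cases hw : w = 1
  · exact ⟨1, le_rfl, by simp [hw]⟩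
  obtain ⟨s, rfl⟩ := WithOne.ne_one_iff_exists.mp hw
  obtain ⟨a, b, hab, heq⟩ := Finite.exists_ne_map_eq_of_infinite
    (fun n : ℕ => ((s : WithOne S) ^ (n + 1)))
  have hP : ∃ p, 1 ≤ p ∧ ∃ i, 1 ≤ i ∧ (s : WithOne S) ^ i = (s : WithOne S) ^ (i + p) := by
    rcases Nat.lt_or_ge a b with h | h
    · exact ⟨b - a, by omega, a + 1, by omega,
        by rw [show a + 1 + (b - a) = b + 1 by omega]; exact heq⟩
    · have h' : b < a := by omega
      exact ⟨a - b, by omega, b + 1, by omega,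
        by rw [show b + 1 + (a - b) = a + 1 by omega]; exact heq.symm⟩
  classical
  obtain ⟨hp1, i₀, hi₀, hper⟩ := Nat.find_spec hP
  by_cases hp₀ : Nat.find hP = 1
  · exact ⟨i₀, hi₀, by rw [← hp₀]; exact hper⟩
  -- otherwise build a nontrivial cyclic subgroup; contradiction
  exfalso
  have hp2 : 2 ≤ Nat.find hP := by omega
  haveI : NeZero (Nat.find hP) := ⟨by omega⟩
  have hstep : ∀ d, (s : WithOne S) ^ (i₀ + d)
      = (s : WithOne S) ^ (i₀ + d + Nat.find hP) := by
    intro d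
    induction d with
    | zero => exact hper
    | succ d ih =>
      calc (s : WithOne S) ^ (i₀ + (d + 1))
          = (s : WithOne S) ^ (i₀ + d) * s := pow_succ _ _
        _ = (s : WithOne S) ^ (i₀ + d + Nat.find hP) * s := by rw [ih]
        _ = (s : WithOne S) ^ (i₀ + d + Nat.find hP + 1) := (pow_succ _ _).symm
        _ = (s : WithOne S) ^ (i₀ + (d + 1) + Nat.find hP) := by
            rw [show i₀ + d + Nat.find hP + 1 = i₀ + (d + 1) + Nat.find hP by omega]
  have hmulper : ∀ c k, i₀ ≤ k → (s : WithOne S) ^ k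
      = (s : WithOne S) ^ (k + c * Nat.find hP) := by
    intro c
    induction c with
    | zero => intro k _; rw [Nat.zero_mul, Nat.add_zero]
    | succ c ih =>
      intro k hk
      have h1 := ih k hk
      have h2 := hstep (k + c * Nat.find hP - i₀)
      rw [show i₀ + (k + c * Nat.find hP - i₀) = k + c * Nat.find hP by omega] at h2
      rw [h1, h2, show k + c * Nat.find hP + Nat.find hP = k + (c + 1) * Nat.find hP by ring]
  have hcong : ∀ k l, i₀ ≤ k → i₀ ≤ l → k % Nat.find hP = l % Nat.find hP →
      (s : WithOne S) ^ k = (s : WithOne S) ^ l := by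
    have haux : ∀ k l, k ≤ l → i₀ ≤ k → k % Nat.find hP = l % Nat.find hP →
        (s : WithOne S) ^ k = (s : WithOne S) ^ l := by
      intro k l h hk hmod
      obtain ⟨c, hc⟩ := (Nat.modEq_iff_dvd' h).mp hmod
      have h3 : l = k + c * Nat.find hP := by
        have := Nat.eq_add_of_sub_eq h hc
        rw [this]; ring
      rw [hmulper c k hk, ← h3]
    intro k l hk hl hmod
    rcases Nat.le_total k l with h | h
    · exact haux k l h hk hmod
    · exact (haux l k h hl hmod.symm).symm
  choose ψ hψ using coe_pow_exists s
  have hm1 : 1 ≤ i₀ * Nat.find hP := Nat.one_le_iff_ne_zero.mpr (by positivity)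
  have hmi : i₀ ≤ i₀ * Nat.find hP := Nat.le_mul_of_pos_right i₀ (by omega)
  set p₀ := Nat.find hP with hp₀def
  set m := i₀ * p₀ with hmdef
  let φ : Multiplicative (ZMod p₀) → S := fun g => ψ (m - 1 + (Multiplicative.toAdd g).val)
  have hφ : ∀ g : Multiplicative (ZMod p₀),
      ((φ g : S) : WithOne S) = (s : WithOne S) ^ (m + (Multiplicative.toAdd g).val) := by
    intro g
    show ((ψ (m - 1 + (Multiplicative.toAdd g).val) : S) : WithOne S) = _
    rw [hψ, show m - 1 + (Multiplicative.toAdd g).val + 1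
      = m + (Multiplicative.toAdd g).val by omega]
  have hmodm : ∀ r, (r + m) % p₀ = r % p₀ := by
    intro r
    rw [hmdef, Nat.mul_comm]
    exact Nat.add_mul_mod_self_left r p₀ i₀
  have hhom : ∀ g h : Multiplicative (ZMod p₀), φ (g * h) = φ g * φ h := by
    intro g h
    apply WithOne.coe_inj.mp
    rw [WithOne.coe_mul, hφ, hφ, hφ, ← pow_add]
    have hv : (Multiplicative.toAdd (g * h)).val
        = ((Multiplicative.toAdd g).val + (Multiplicative.toAdd h).val) % p₀ := by
      rw [toAdd_mul]
      exact ZMod.val_add _ _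
    rw [hv]
    apply hcong
    · omega
    · omega
    · calc (m + ((Multiplicative.toAdd g).val + (Multiplicative.toAdd h).val) % p₀) % p₀
          = (((Multiplicative.toAdd g).val + (Multiplicative.toAdd h).val) % p₀ + m) % p₀ := by
            rw [Nat.add_comm]
        _ = ((Multiplicative.toAdd g).val + (Multiplicative.toAdd h).val) % p₀ % p₀ :=
            hmodm _
        _ = ((Multiplicative.toAdd g).val + (Multiplicative.toAdd h).val) % p₀ :=
            Nat.mod_mod_of_dvd _ dvd_rfl
        _ = (((Multiplicative.toAdd g).val + (Multiplicative.toAdd h).val) + m + m) % p₀ := by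
            rw [hmodm, hmodm]
        _ = (m + (Multiplicative.toAdd g).val + (m + (Multiplicative.toAdd h).val)) % p₀ := by
            rw [show (Multiplicative.toAdd g).val + (Multiplicative.toAdd h).val + m + m
              = m + (Multiplicative.toAdd g).val + (m + (Multiplicative.toAdd h).val) by ring]
  have hinj : Function.Injective φ := by
    intro g h hgh
    have hc : (s : WithOne S) ^ (m + (Multiplicative.toAdd g).val)
        = (s : WithOne S) ^ (m + (Multiplicative.toAdd h).val) := by
      rw [← hφ, ← hφ, hgh]
    have hval : (Multiplicative.toAdd g).val = (Multiplicative.toAdd h).val := by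
      by_contra hne
      have haux : ∀ (g' h' : Multiplicative (ZMod p₀)),
          (Multiplicative.toAdd g').val < (Multiplicative.toAdd h').val →
          (s : WithOne S) ^ (m + (Multiplicative.toAdd g').val)
            = (s : WithOne S) ^ (m + (Multiplicative.toAdd h').val) → False := by
        intro g' h' hlt hc'
        have hd2 : (Multiplicative.toAdd h').val - (Multiplicative.toAdd g').val < p₀ := by
          have := ZMod.val_lt (Multiplicative.toAdd h')
          omega
        refine Nat.find_min hP hd2 ⟨by omega, m + (Multiplicative.toAdd g').val, by omega, ?_⟩
        rw [show m + (Multiplicative.toAdd g').val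
          + ((Multiplicative.toAdd h').val - (Multiplicative.toAdd g').val)
          = m + (Multiplicative.toAdd h').val by omega]
        exact hc'
      rcases Nat.lt_or_ge (Multiplicative.toAdd g).val (Multiplicative.toAdd h).val with h1 | h1
      · exact haux g h h1 hc
      · exact haux h g (by omega) hc.symm
    have : Multiplicative.toAdd g = Multiplicative.toAdd h := ZMod.val_injective p₀ hval
    exact Multiplicative.toAdd.injective this
  have htr := htriv (Multiplicative (ZMod p₀)) φ hhom hinj (Multiplicative.ofAdd 1)
  have h10 : (1 : ZMod p₀) = 0 := by
    have := congrArg Multiplicative.toAdd htr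
    simpa using this
  have hval10 := congrArg ZMod.val h10
  rw [ZMod.val_one_eq_one_mod, ZMod.val_zero, Nat.mod_eq_of_lt (by omega : 1 < p₀)] at hval10
  exact one_ne_zero hval10

end WithOnePart

/-- Every finite aperiodic inverse semigroup (inverse semigroup all of whose subgroups
are trivial) is strongly Mal'cev nilpotent. -/
theorem stmt19 (S : Type*) [Semigroup S] [Finite S]
    (hinv : IsInverseSemigroup S) (htriv : AllSubgroupsTrivial S) :
    StronglyMalcevNilpotent S := by
  classical
  haveI : Fintype S := Fintype.ofFinite S
  haveI : Finite (WithOne S) := inferInstanceAs (Finite (Option S))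
  have hinvT : ∀ x : WithOne S, ∃! y : WithOne S, x * y * x = x ∧ y * x * y = y := by
    intro x
    by_cases hx : x = 1
    · subst hx
      refine ⟨1, ⟨by simp, by simp⟩, ?_⟩
      rintro y ⟨h1, h2⟩
      simpa using h1
    · obtain ⟨s, rfl⟩ := WithOne.ne_one_iff_exists.mp hx
      obtain ⟨y₀, hy₀, hy₀u⟩ := hinv s
      refine ⟨(y₀ : WithOne S), ⟨?_, ?_⟩, ?_⟩
      · rw [← WithOne.coe_mul, ← WithOne.coe_mul, hy₀.1]
      · rw [← WithOne.coe_mul, ← WithOne.coe_mul, hy₀.2]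
      · rintro y ⟨h1, h2⟩
        by_cases hy : y = 1
        · subst hy
          exfalso
          rw [mul_one, one_mul] at h2
          exact WithOne.coe_ne_one h2
        · obtain ⟨u, rfl⟩ := WithOne.ne_one_iff_exists.mp hy
          have h1' : s * u * s = s := by
            apply WithOne.coe_inj.mp
            rw [WithOne.coe_mul, WithOne.coe_mul]
            exact h1
          have h2' : u * s * u = u := by
            apply WithOne.coe_inj.mp
            rw [WithOne.coe_mul, WithOne.coe_mul]
            exact h2
          rw [hy₀u u ⟨h1', h2'⟩]
  choose iv hiv huniqv using hinvT
  let K : Kit (WithOne S) :=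
    { i := iv
      hi1 := fun x => (hiv x).1
      hi2 := fun x => (hiv x).2
      huniq := fun x y h1 h2 => huniqv x y ⟨h1, h2⟩
      haper := haper_withOne htriv }
  refine ⟨4 * Nat.card (WithOne S) + 6, by omega, ?_⟩
  intro t ht x z i j
  exact mainAbstract K ht (fun k => (x k : WithOne S)) z le_rfl i j



end SMN
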